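/- For every bounded linear operator A on a complex Hilbert space, w²(A) ≤ (1/2)[ ‖A‖²·( min over t ∈ [0,1] of ‖t·A*A + (1 − t)·AA*‖ ) + w²(A²) + w(A²)·‖A*A + AA*‖ ]^{1/2}. -/

import Mathlib

open scoped InnerProductSpace
open ContinuousLinearMap

/-- The numerical radius of a bounded linear operator. -/
noncomputable def numRadius {H : Type*} [NormedAddCommGroup H] [InnerProductSpace ℂ H]
    (A : H →L[ℂ] H) : ℝ :=
  sSup {r : ℝ | ∃ x : H, ‖x‖ = 1 ∧ r = ‖⟪A x, x⟫_ℂ‖}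

/-- The Crawford number of a bounded linear operator. -/
noncomputable def crawford {H : Type*} [NormedAddCommGroup H] [InnerProductSpace ℂ H]
    (A : H →L[ℂ] H) : ℝ :=
  sInf {r : ℝ | ∃ x : H, ‖x‖ = 1 ∧ r = ‖⟪A x, x⟫_ℂ‖}

/-- The real part of a bounded linear operator. -/
noncomputable def reP {H : Type*} [NormedAddCommGroup H] [InnerProductSpace ℂ H]
    [CompleteSpace H] (A : H →L[ℂ] H) : H →L[ℂ] H :=
  ((2 : ℂ)⁻¹) • (A + adjoint A)

/-- The imaginary part of a bounded linear operator. -/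
noncomputable def imP {H : Type*} [NormedAddCommGroup H] [InnerProductSpace ℂ H]
    [CompleteSpace H] (A : H →L[ℂ] H) : H →L[ℂ] H :=
  ((2 * Complex.I)⁻¹) • (A - adjoint A)

/-!
Fix a unit vector `x` and put `P = ‖A x‖`, `Q = ‖A* x‖`. Buzano's inequality for `A x`, `A* x`
and `x` gives `|⟪A x, x⟫|² ≤ (P Q + |⟪A² x, x⟫|) / 2`. Squaring the right-hand side, each term
is bounded separately: `P² Q² ≤ ‖A‖² (t P² + (1 - t) Q²) ≤ ‖A‖² ‖t A*A + (1 - t) A A*‖` because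
`P, Q ≤ ‖A‖`; `2 P Q ≤ P² + Q² ≤ ‖A*A + A A*‖`; and `|⟪A² x, x⟫| ≤ w(A²)`.
-/

section NumRadius

variable {H : Type*} [NormedAddCommGroup H] [InnerProductSpace ℂ H]

lemma numRadius_nonneg (A : H →L[ℂ] H) : 0 ≤ numRadius A :=
  Real.sSup_nonneg (by rintro r ⟨x, -, rfl⟩; positivity)

lemma norm_inner_apply_self_le_opNorm (A : H →L[ℂ] H) {x : H} (hx : ‖x‖ = 1) :
    ‖⟪A x, x⟫_ℂ‖ ≤ ‖A‖ :=
  calc ‖⟪A x, x⟫_ℂ‖ ≤ ‖A x‖ * ‖x‖ := norm_inner_le_norm _ _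
    _ ≤ ‖A‖ * ‖x‖ * ‖x‖ := by gcongr; exact A.le_opNorm x
    _ = ‖A‖ := by rw [hx, mul_one, mul_one]

lemma le_opNorm_of_inner_apply_self_eq_ofReal {B : H →L[ℂ] H} {x : H} (hx : ‖x‖ = 1) {r : ℝ}
    (hr : ⟪B x, x⟫_ℂ = r) : r ≤ ‖B‖ := by
  have := norm_inner_apply_self_le_opNorm B hx
  rw [hr, Complex.norm_real, Real.norm_eq_abs] at this
  exact (le_abs_self r).trans this

lemma norm_inner_apply_self_le_numRadius (A : H →L[ℂ] H) {x : H} (hx : ‖x‖ = 1) :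
    ‖⟪A x, x⟫_ℂ‖ ≤ numRadius A :=
  le_csSup ⟨‖A‖, by rintro r ⟨y, hy, rfl⟩; exact norm_inner_apply_self_le_opNorm A hy⟩
    ⟨x, hx, rfl⟩

lemma sq_numRadius_le_of_forall {A : H →L[ℂ] H} {c : ℝ} (hc : 0 ≤ c)
    (h : ∀ x : H, ‖x‖ = 1 → ‖⟪A x, x⟫_ℂ‖ ^ 2 ≤ c) : numRadius A ^ 2 ≤ c := by
  have hle : numRadius A ≤ √c :=
    Real.sSup_le (by rintro r ⟨x, hx, rfl⟩; exact Real.le_sqrt_of_sq_le (h x hx))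
      (Real.sqrt_nonneg c)
  exact (Real.le_sqrt (numRadius_nonneg A) hc).mp hle

end NumRadius

/-- Buzano's inequality. -/
lemma norm_inner_mul_inner_le {H : Type*} [NormedAddCommGroup H] [InnerProductSpace ℂ H]
    (a b e : H) (he : ‖e‖ = 1) :
    ‖⟪a, e⟫_ℂ * ⟪e, b⟫_ℂ‖ ≤ (‖a‖ * ‖b‖ + ‖⟪a, b⟫_ℂ‖) / 2 := by
  have hsum : 2 * (⟪a, e⟫_ℂ * ⟪e, b⟫_ℂ) = ⟪a, b⟫_ℂ + ⟪(ℂ ∙ e).reflection a, b⟫_ℂ := by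
    rw [Submodule.reflection_apply, Submodule.starProjection_unit_singleton ℂ he, two_smul,
      inner_sub_left, inner_add_left, inner_smul_left, inner_conj_symm]
    ring
  have h2 : ‖2 * (⟪a, e⟫_ℂ * ⟪e, b⟫_ℂ)‖ ≤ ‖a‖ * ‖b‖ + ‖⟪a, b⟫_ℂ‖ :=
    calc ‖2 * (⟪a, e⟫_ℂ * ⟪e, b⟫_ℂ)‖
        ≤ ‖⟪a, b⟫_ℂ‖ + ‖(ℂ ∙ e).reflection a‖ * ‖b‖ := by
          rw [hsum]; exact (norm_add_le _ _).trans (by gcongr; exact norm_inner_le_norm _ _)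
      _ = ‖a‖ * ‖b‖ + ‖⟪a, b⟫_ℂ‖ := by rw [LinearIsometryEquiv.norm_map]; ring
  rw [norm_mul, Complex.norm_ofNat] at h2
  linarith

section Adjoint

variable {H : Type*} [NormedAddCommGroup H] [InnerProductSpace ℂ H] [CompleteSpace H]

lemma inner_adjoint_mul_self_apply_self (A : H →L[ℂ] H) (x : H) :
    ⟪(adjoint A * A) x, x⟫_ℂ = ((‖A x‖ ^ 2 : ℝ) : ℂ) := by
  rw [mul_apply_eq_comp, adjoint_inner_left, inner_self_eq_norm_sq_to_K]
  norm_cast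

lemma inner_mul_adjoint_apply_self (A : H →L[ℂ] H) (x : H) :
    ⟪(A * adjoint A) x, x⟫_ℂ = ((‖adjoint A x‖ ^ 2 : ℝ) : ℂ) := by
  simpa using inner_adjoint_mul_self_apply_self (adjoint A) x

lemma sq_norm_inner_apply_self_le (A : H →L[ℂ] H) {x : H} (hx : ‖x‖ = 1) :
    ‖⟪A x, x⟫_ℂ‖ ^ 2 ≤ (‖A x‖ * ‖adjoint A x‖ + ‖⟪(A ^ 2) x, x⟫_ℂ‖) / 2 := by
  have h := norm_inner_mul_inner_le (A x) (adjoint A x) x hx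
  rwa [adjoint_inner_right, adjoint_inner_right, norm_mul, ← sq, ← mul_apply_eq_comp,
    ← pow_two] at h

lemma sq_norm_apply_add_sq_norm_adjoint_apply_le (A : H →L[ℂ] H) {x : H} (hx : ‖x‖ = 1) :
    ‖A x‖ ^ 2 + ‖adjoint A x‖ ^ 2 ≤ ‖adjoint A * A + A * adjoint A‖ := by
  refine le_opNorm_of_inner_apply_self_eq_ofReal hx ?_
  rw [add_apply, inner_add_left, inner_adjoint_mul_self_apply_self, inner_mul_adjoint_apply_self]
  push_cast
  rfl

lemma sq_norm_apply_mul_sq_norm_adjoint_apply_le (A : H →L[ℂ] H) {x : H} (hx : ‖x‖ = 1)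
    {t : ℝ} (ht : t ∈ Set.Icc (0 : ℝ) 1) :
    ‖A x‖ ^ 2 * ‖adjoint A x‖ ^ 2 ≤
      ‖A‖ ^ 2 * ‖(t : ℂ) • (adjoint A * A) + ((1 - t : ℝ) : ℂ) • (A * adjoint A)‖ := by
  obtain ⟨ht0, ht1⟩ := ht
  have hP : ‖A x‖ ≤ ‖A‖ := by simpa [hx] using A.le_opNorm x
  have hQ : ‖adjoint A x‖ ≤ ‖A‖ := by simpa [hx] using (adjoint A).le_opNorm x
  have hconv : t * ‖A x‖ ^ 2 + (1 - t) * ‖adjoint A x‖ ^ 2 ≤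
      ‖(t : ℂ) • (adjoint A * A) + ((1 - t : ℝ) : ℂ) • (A * adjoint A)‖ := by
    refine le_opNorm_of_inner_apply_self_eq_ofReal hx ?_
    rw [add_apply, inner_add_left, smul_apply, smul_apply, inner_smul_left, inner_smul_left,
      inner_adjoint_mul_self_apply_self, inner_mul_adjoint_apply_self]
    simp only [Complex.conj_ofReal]
    push_cast
    ring
  have hP2 : ‖A x‖ ^ 2 ≤ ‖A‖ ^ 2 := by gcongr
  have hQ2 : ‖adjoint A x‖ ^ 2 ≤ ‖A‖ ^ 2 := by gcongr
  calc ‖A x‖ ^ 2 * ‖adjoint A x‖ ^ 2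
      = t * (‖A x‖ ^ 2 * ‖adjoint A x‖ ^ 2) + (1 - t) * (‖A x‖ ^ 2 * ‖adjoint A x‖ ^ 2) := by
        ring
    _ ≤ t * (‖A x‖ ^ 2 * ‖A‖ ^ 2) + (1 - t) * (‖A‖ ^ 2 * ‖adjoint A x‖ ^ 2) := by
        gcongr
    _ = ‖A‖ ^ 2 * (t * ‖A x‖ ^ 2 + (1 - t) * ‖adjoint A x‖ ^ 2) := by ring
    _ ≤ _ := by gcongr

lemma sq_norm_apply_mul_sq_norm_adjoint_apply_le_sInf (A : H →L[ℂ] H) {x : H} (hx : ‖x‖ = 1) :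
    ‖A x‖ ^ 2 * ‖adjoint A x‖ ^ 2 ≤ ‖A‖ ^ 2 * sInf {s : ℝ | ∃ t ∈ Set.Icc (0 : ℝ) 1,
      s = ‖(t : ℂ) • (adjoint A * A) + ((1 - t : ℝ) : ℂ) • (A * adjoint A)‖} := by
  rw [← smul_eq_mul (‖A‖ ^ 2), ← Real.sInf_smul_of_nonneg (by positivity)]
  refine le_csInf (Set.Nonempty.smul_set ⟨_, 0, by simp, rfl⟩) ?_
  rintro _ ⟨_, ⟨t, ht, rfl⟩, rfl⟩
  exact sq_norm_apply_mul_sq_norm_adjoint_apply_le A hx ht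

end Adjoint

theorem stmt12_general {H : Type*} [NormedAddCommGroup H] [InnerProductSpace ℂ H]
    [CompleteSpace H] (A : H →L[ℂ] H) :
    numRadius A ^ 2 ≤ (1/2 : ℝ) * Real.sqrt
      (‖A‖ ^ 2 * sInf {s : ℝ | ∃ t ∈ Set.Icc (0 : ℝ) 1,
          s = ‖(t : ℂ) • (adjoint A * A) + ((1 - t : ℝ) : ℂ) • (A * adjoint A)‖} +
        numRadius (A ^ 2) ^ 2 +
        numRadius (A ^ 2) * ‖adjoint A * A + A * adjoint A‖) := by
  set m := sInf {s : ℝ | ∃ t ∈ Set.Icc (0 : ℝ) 1,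
    s = ‖(t : ℂ) • (adjoint A * A) + ((1 - t : ℝ) : ℂ) • (A * adjoint A)‖}
  set w := numRadius (A ^ 2)
  set N := ‖adjoint A * A + A * adjoint A‖
  have hm : 0 ≤ m := Real.sInf_nonneg (by rintro s ⟨t, -, rfl⟩; positivity)
  have hw : 0 ≤ w := numRadius_nonneg _
  refine sq_numRadius_le_of_forall (by positivity) fun x hx => ?_
  set P := ‖A x‖
  set Q := ‖adjoint A x‖
  set r := ‖⟪(A ^ 2) x, x⟫_ℂ‖
  have hPQ : P ^ 2 * Q ^ 2 ≤ ‖A‖ ^ 2 * m :=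
    sq_norm_apply_mul_sq_norm_adjoint_apply_le_sInf A hx
  have hPQN : 2 * P * Q ≤ N :=
    (two_mul_le_add_sq P Q).trans (sq_norm_apply_add_sq_norm_adjoint_apply_le A hx)
  have hr : r ≤ w := norm_inner_apply_self_le_numRadius _ hx
  have hsqrt : P * Q + r ≤ √(‖A‖ ^ 2 * m + w ^ 2 + w * N) := by
    refine Real.le_sqrt_of_sq_le ?_
    have hrN : 2 * P * Q * r ≤ N * w := by gcongr
    have hr2 : r ^ 2 ≤ w ^ 2 := by gcongr
    nlinarith
  linarith [sq_norm_inner_apply_self_le A hx]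

theorem stmt12 {H : Type*} [NormedAddCommGroup H] [InnerProductSpace ℂ H]
    [CompleteSpace H] [Nontrivial H] (A : H →L[ℂ] H) :
    numRadius A ^ 2 ≤ (1/2 : ℝ) * Real.sqrt
      (‖A‖ ^ 2 * sInf {s : ℝ | ∃ t ∈ Set.Icc (0 : ℝ) 1,
          s = ‖(t : ℂ) • (adjoint A * A) + ((1 - t : ℝ) : ℂ) • (A * adjoint A)‖} +
        numRadius (A ^ 2) ^ 2 +
        numRadius (A ^ 2) * ‖adjoint A * A + A * adjoint A‖) :=
  stmt12_general A
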